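/- Let r ≥ 1 be an integer and s ∈ ℝ with s > 1. Then ζ_r⋆(s) = ∑ 1 / (1^{c₁} c₁! · 2^{c₂} c₂! ⋯ r^{c_r} c_r!) · ζ(s)^{c₁} ζ(2s)^{c₂} ⋯ ζ(rs)^{c_r}, where the sum runs over all tuples (c₁,…,c_r) of nonnegative integers satisfying c₁ + 2c₂ + ⋯ + r·c_r = r. -/

import Mathlib

/-- The Riemann zeta function for real `s > 1`, as the series `∑ n^{-s}`. -/
noncomputable def riemannZetaReal (s : ℝ) : ℝ :=
  ∑' n : ℕ+, (((n : ℕ) : ℝ) ^ s)⁻¹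

/-- The multiple zeta-star function at identical arguments:
`ζ_r⋆(s) = ∑_{n₁ ≥ ⋯ ≥ n_r ≥ 1} (n₁ ⋯ n_r)^{-s}`. -/
noncomputable def multZetaStar (r : ℕ) (s : ℝ) : ℝ :=
  ∑' f : {f : Fin r → ℕ+ // Antitone f}, ∏ i, (((f.1 i : ℕ) : ℝ) ^ s)⁻¹

/-- The (finite) set of all tuples `(c₁, …, c_r)` of nonnegative integers with
`c₁ + 2c₂ + ⋯ + r·c_r = r`. -/
def weightedTuples (r : ℕ) : Finset (Fin r → ℕ) :=
  (Fintype.piFinset fun _ : Fin r => Finset.range (r + 1)).filter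
    fun c => ∑ i : Fin r, (i.val + 1) * c i = r

/-!
Put `x n = n^{-s}` for `n ≥ 1`. An antitone tuple is the same as a multiset, so `ζ_r⋆(s)` is the
complete homogeneous symmetric function `h_r(x)`, while `ζ(ks)` is the power sum `p_k(x)`. Both
`h_r` and the right-hand side `∑_c p^c / z_c`, `z_c = ∏ k^{c_k} c_k!`, satisfy Newton's identity
`r h_r = ∑_{k=1}^r p_k h_{r-k}` with `h_0 = 1`, hence they agree. For `h_r` the identity is a
double count: a multiset `M` of size `r` contains `a^k` for exactly `r` pairs `(k, a)`, and removing
`a^k` leaves a multiset of size `r - k`. For the right-hand side it comes from removing one cycle of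
length `k`, i.e. `c ↦ c - e_k`. Working in `ℝ≥0∞` makes all rearrangements of the series free.
-/

open Finset Function
open scoped ENNReal

@[to_additive]
theorem Fintype.prod_apply_update {ι α M : Type*} [Fintype ι] [DecidableEq ι] [CommMonoid M]
    (g : ι → α → M) (c : ι → α) (i : ι) (v : α) :
    ∏ j, g j (update c i v j) = g i v * ∏ j ∈ {i}ᶜ, g j (c j) := by
  rw [Fintype.prod_eq_mul_prod_compl i, update_self]
  exact congrArg _ (Finset.prod_congr rfl fun j hj => by rw [update_of_ne (by simpa using hj)])

theorem bijective_sym_ofFn_antitone {α : Type*} [LinearOrder α] {n : ℕ} :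
    Bijective fun f : {f : Fin n → α // Antitone f} =>
      (Sym.mk (List.ofFn f.1) (by simp) : Sym α n) := by
  constructor
  · rintro ⟨f, hf⟩ ⟨g, hg⟩ hfg
    have hperm : (List.ofFn f).Perm (List.ofFn g) := Quotient.exact (congrArg Subtype.val hfg)
    have := hperm.eq_of_pairwise' (r := (· ≥ ·)) (List.pairwise_ofFn.2 fun _ _ h => hf h.le)
      (List.pairwise_ofFn.2 fun _ _ h => hg h.le)
    exact Subtype.ext (List.ofFn_injective this)
  · intro s
    set l := (s : Multiset α).sort (· ≥ ·)
    have hl : l.length = n := by simp [l]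
    refine ⟨⟨fun i => l.get (i.cast hl.symm), fun i j hij => ?_⟩, Sym.coe_injective ?_⟩
    · rcases hij.lt_or_eq with h | rfl
      · exact (Multiset.pairwise_sort _ _).rel_get_of_lt
          (show i.cast hl.symm < j.cast hl.symm from h)
      · rfl
    · have hfn : List.ofFn (fun i : Fin n => l.get (i.cast hl.symm)) = l :=
        List.ext_get (by simp [hl]) fun _ _ _ => by simp
      simp only [hfn, l, Multiset.sort_eq]
      rfl

def Sym.subtypeReplicateLeEquiv {α : Type*} [DecidableEq α] (a : α) {j m n : ℕ}
    (h : m + j = n) : {s : Sym α n // Multiset.replicate j a ≤ s} ≃ Sym α m where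
  toFun s := ⟨s.1 - Multiset.replicate j a, by
    rw [Multiset.card_sub s.2, Sym.card_coe, Multiset.card_replicate]; omega⟩
  invFun t := ⟨⟨t + Multiset.replicate j a, by simp [← h]⟩, Multiset.le_add_left _ _⟩
  left_inv s := Subtype.ext <| Sym.coe_injective <| tsub_add_cancel_of_le s.2
  right_inv t := Sym.coe_injective <| add_tsub_cancel_right _ _

theorem eq_of_newton_recursion {K : Type*} [Field K] [CharZero K] {p u v : ℕ → K} {N : ℕ}
    (h0 : u 0 = v 0)
    (hu : ∀ n < N, (n + 1 : K) * u (n + 1) = ∑ k ∈ range (n + 1), p (k + 1) * u (n - k))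
    (hv : ∀ n < N, (n + 1 : K) * v (n + 1) = ∑ k ∈ range (n + 1), p (k + 1) * v (n - k)) :
    ∀ n ≤ N, u n = v n := by
  intro n
  induction n using Nat.strong_induction_on with
  | _ n ih =>
    rcases n with _ | n
    · exact fun _ => h0
    · intro hn
      have hsum : ∑ k ∈ range (n + 1), p (k + 1) * u (n - k) =
          ∑ k ∈ range (n + 1), p (k + 1) * v (n - k) :=
        sum_congr rfl fun k _ => by rw [ih (n - k) (by omega) (by omega)]
      exact mul_left_cancel₀ (Nat.cast_add_one_ne_zero n)
        ((hu n hn).trans (hsum.trans (hv n hn).symm))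

namespace ENNReal

variable {α : Type*}

noncomputable def completeHomogeneousSum (x : α → ℝ≥0∞) (n : ℕ) : ℝ≥0∞ :=
  ∑' s : Sym α n, ((s : Multiset α).map x).prod

noncomputable def powerSum (x : α → ℝ≥0∞) (k : ℕ) : ℝ≥0∞ :=
  ∑' a, x a ^ k

theorem completeHomogeneousSum_zero (x : α → ℝ≥0∞) : completeHomogeneousSum x 0 = 1 := by
  rw [completeHomogeneousSum,
    tsum_eq_single Sym.nil fun s hs => absurd (Sym.eq_nil_of_card_zero s) hs]
  rfl

variable [DecidableEq α]

theorem tsum_ite_replicate_le (s : Multiset α) :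
    ∑' p : ℕ × α, (if Multiset.replicate (p.1 + 1) p.2 ≤ s then 1 else 0 : ℝ≥0∞) =
      Multiset.card s := by
  have hcount (a : α) :
      ∑' k : ℕ, (if Multiset.replicate (k + 1) a ≤ s then 1 else 0 : ℝ≥0∞) = s.count a := by
    simp_rw [← Multiset.le_count_iff_replicate_le, Nat.add_one_le_iff]
    rw [tsum_eq_sum (s := range (s.count a)) fun k hk => if_neg (by simpa using hk)]
    simp [filter_true_of_mem fun k hk => mem_range.1 hk]
  rw [ENNReal.tsum_prod', ENNReal.tsum_comm, tsum_congr hcount,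
    tsum_eq_sum (s := s.toFinset) fun a ha => by simpa using ha]
  exact_mod_cast Multiset.toFinset_sum_count_eq s

theorem tsum_sym_ite_replicate_le (x : α → ℝ≥0∞) (a : α) {j m n : ℕ} (h : m + j = n) :
    ∑' s : Sym α n, (if Multiset.replicate j a ≤ s then ((s : Multiset α).map x).prod else 0) =
      x a ^ j * completeHomogeneousSum x m := by
  calc _ = ∑' s : {s : Sym α n | Multiset.replicate j a ≤ s}, ((s.1 : Multiset α).map x).prod := by
        refine ((_root_.tsum_subtype {s : Sym α n | Multiset.replicate j a ≤ s}
          fun s => ((s : Multiset α).map x).prod).trans (tsum_congr fun s => ?_)).symm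
        simp only [Set.indicator_apply, Set.mem_ofPred_eq]
    _ = ∑' t : Sym α m, x a ^ j * ((t : Multiset α).map x).prod := by
        refine ((Sym.subtypeReplicateLeEquiv a h).symm.tsum_eq
          fun s => ((s.1 : Multiset α).map x).prod).symm.trans (tsum_congr fun t => ?_)
        show ((t + Multiset.replicate j a : Multiset α).map x).prod = _
        simp [mul_comm]
    _ = _ := ENNReal.tsum_mul_left

theorem completeHomogeneousSum_newton (x : α → ℝ≥0∞) (n : ℕ) :
    ((n + 1 : ℕ) : ℝ≥0∞) * completeHomogeneousSum x (n + 1) =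
      ∑ k ∈ range (n + 1), powerSum x (k + 1) * completeHomogeneousSum x (n - k) := by
  have hslice (k : ℕ) :
      ∑' (a : α) (s : Sym α (n + 1)),
          (if Multiset.replicate (k + 1) a ≤ s then ((s : Multiset α).map x).prod else 0) =
        if k ≤ n then powerSum x (k + 1) * completeHomogeneousSum x (n - k) else 0 := by
    split_ifs with hk
    · simp_rw [tsum_sym_ite_replicate_le x _ (show n - k + (k + 1) = n + 1 by omega)]
      exact ENNReal.tsum_mul_right
    · refine ENNReal.tsum_eq_zero.2 fun a => ENNReal.tsum_eq_zero.2 fun s => if_neg fun hle => ?_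
      have := Multiset.card_le_card hle
      simp only [Multiset.card_replicate, Sym.card_coe] at this
      omega
  calc ((n + 1 : ℕ) : ℝ≥0∞) * completeHomogeneousSum x (n + 1)
      = ∑' (s : Sym α (n + 1)) (p : ℕ × α),
          if Multiset.replicate (p.1 + 1) p.2 ≤ s then ((s : Multiset α).map x).prod else 0 := by
        rw [completeHomogeneousSum, ← ENNReal.tsum_mul_left]
        refine tsum_congr fun s => ?_
        have hcard := tsum_ite_replicate_le (s : Multiset α)
        rw [Sym.card_coe] at hcard
        rw [← hcard, ← ENNReal.tsum_mul_right]
        simp_rw [ite_mul, one_mul, zero_mul]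
    _ = ∑' k, if k ≤ n then powerSum x (k + 1) * completeHomogeneousSum x (n - k) else 0 := by
        rw [ENNReal.tsum_comm, ENNReal.tsum_prod']
        exact tsum_congr hslice
    _ = _ := by
        rw [tsum_eq_sum (s := range (n + 1)) fun k hk => if_neg (by simpa using hk)]
        exact sum_congr rfl fun k hk => if_pos (Nat.lt_succ_iff.1 (mem_range.1 hk))

theorem completeHomogeneousSum_ne_top {x : α → ℝ≥0∞} (hp : ∀ k, powerSum x (k + 1) ≠ ∞)
    (n : ℕ) : completeHomogeneousSum x n ≠ ∞ := by
  induction n using Nat.strong_induction_on with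
  | _ n ih =>
    rcases n with _ | n
    · simp [completeHomogeneousSum_zero]
    · have hsum :
          ∑ k ∈ range (n + 1), powerSum x (k + 1) * completeHomogeneousSum x (n - k) ≠ ∞ :=
        sum_ne_top.2 fun k _ => mul_ne_top (hp k) (ih _ (by omega))
      rw [← completeHomogeneousSum_newton] at hsum
      exact fun htop => hsum (mul_eq_top.2 (Or.inl ⟨by exact_mod_cast n.succ_ne_zero, htop⟩))

theorem toReal_completeHomogeneousSum_newton {x : α → ℝ≥0∞}
    (hp : ∀ k, powerSum x (k + 1) ≠ ∞) (n : ℕ) :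
    (n + 1 : ℝ) * (completeHomogeneousSum x (n + 1)).toReal =
      ∑ k ∈ range (n + 1),
        (powerSum x (k + 1)).toReal * (completeHomogeneousSum x (n - k)).toReal := by
  have h := congrArg ENNReal.toReal (completeHomogeneousSum_newton x n)
  rw [toReal_mul, toReal_natCast,
    toReal_sum fun k _ => mul_ne_top (hp k) (completeHomogeneousSum_ne_top hp _)] at h
  simpa using h

end ENNReal

section CycleIndex

variable {n : ℕ}

def tupleWeight (c : Fin n → ℕ) : ℕ := ∑ i, (i.val + 1) * c i

def tuplesOfWeight (n m : ℕ) : Finset (Fin n → ℕ) :=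
  (Fintype.piFinset fun _ : Fin n => range (m + 1)).filter fun c => tupleWeight c = m

/-- The order of the centralizer in `S_m` of a permutation with `c i` cycles of length `i + 1`;
thus `cycleIndexSum q n m` is the cycle index of `S_m` evaluated at the power sums `q k`. -/
def centralizerCard (c : Fin n → ℕ) : ℕ := ∏ i, (i.val + 1) ^ c i * (c i).factorial

noncomputable def cycleIndexTerm {K : Type*} [Field K] (q : ℕ → K) (c : Fin n → ℕ) : K :=
  (centralizerCard c : K)⁻¹ * ∏ i : Fin n, q (i + 1) ^ c i

noncomputable def cycleIndexSum {K : Type*} [Field K] (q : ℕ → K) (n m : ℕ) : K :=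
  ∑ c ∈ tuplesOfWeight n m, cycleIndexTerm q c

theorem le_tupleWeight (c : Fin n → ℕ) (i : Fin n) : (i.val + 1) * c i ≤ tupleWeight c :=
  single_le_sum (f := fun i : Fin n => (i.val + 1) * c i) (fun _ _ => Nat.zero_le _) (mem_univ i)

theorem mem_tuplesOfWeight {m : ℕ} {c : Fin n → ℕ} :
    c ∈ tuplesOfWeight n m ↔ tupleWeight c = m := by
  refine ⟨fun hc => (mem_filter.1 hc).2, fun hc => mem_filter.2 ⟨?_, hc⟩⟩
  refine Fintype.mem_piFinset.2 fun i => mem_range.2 ?_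
  have := le_tupleWeight c i
  nlinarith

theorem tupleWeight_update_succ (c : Fin n → ℕ) (i : Fin n) :
    tupleWeight (update c i (c i + 1)) = tupleWeight c + (i.val + 1) := by
  rw [tupleWeight, tupleWeight, Fintype.sum_apply_update, Fintype.sum_eq_add_sum_compl i]
  ring

theorem centralizerCard_update_succ (c : Fin n → ℕ) (i : Fin n) :
    centralizerCard (update c i (c i + 1)) = (i.val + 1) * (c i + 1) * centralizerCard c := by
  rw [centralizerCard, centralizerCard,
    Fintype.prod_apply_update fun (j : Fin n) (k : ℕ) => (j.val + 1) ^ k * k.factorial,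
    Fintype.prod_eq_mul_prod_compl i, pow_succ, Nat.factorial_succ]
  ring

variable {K : Type*} [Field K] (q : ℕ → K)

theorem cycleIndexSum_zero (n : ℕ) : cycleIndexSum q n 0 = 1 := by
  have : tuplesOfWeight n 0 = {0} := by
    ext c
    simp [mem_tuplesOfWeight, tupleWeight, funext_iff]
  simp [cycleIndexSum, this, cycleIndexTerm, centralizerCard]

variable [CharZero K]

theorem mul_cycleIndexTerm_update_succ (c : Fin n → ℕ) (i : Fin n) :
    ((i.val + 1) * (c i + 1) : K) * cycleIndexTerm q (update c i (c i + 1)) =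
      q (i + 1) * cycleIndexTerm q c := by
  rw [cycleIndexTerm, cycleIndexTerm, centralizerCard_update_succ, Fintype.prod_apply_update,
    Fintype.prod_eq_mul_prod_compl i fun j => q (j + 1) ^ c j, pow_succ]
  push_cast
  field_simp

theorem sum_mul_cycleIndexTerm {m : ℕ} (i : Fin n) (hi : i.val + 1 ≤ m) :
    ∑ c ∈ tuplesOfWeight n m, ((i.val + 1) * c i : K) * cycleIndexTerm q c =
      q (i + 1) * cycleIndexSum q n (m - (i.val + 1)) := by
  rw [cycleIndexSum, mul_sum, ← sum_filter_of_ne (p := fun c => c i ≠ 0)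
    fun c _ h hc => h (by simp [hc])]
  symm
  refine sum_nbij' (fun d => update d i (d i + 1)) (fun c => update c i (c i - 1))
    (fun d hd => ?_) (fun c hc => ?_) (fun d _ => by simp) (fun c hc => ?_) (fun d _ => ?_)
  · rw [mem_tuplesOfWeight] at hd
    simp only [mem_filter, mem_tuplesOfWeight, tupleWeight_update_succ, update_self]
    omega
  · simp only [mem_filter, mem_tuplesOfWeight] at hc
    have := tupleWeight_update_succ (update c i (c i - 1)) i
    simp only [update_self, Nat.sub_add_cancel (Nat.pos_of_ne_zero hc.2), update_idem,
      update_eq_self] at this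
    rw [mem_tuplesOfWeight]
    omega
  · rw [mem_filter] at hc
    simp [Nat.sub_add_cancel (Nat.pos_of_ne_zero hc.2)]
  · rw [← mul_cycleIndexTerm_update_succ, update_self]
    push_cast
    ring

theorem cycleIndexSum_newton {m : ℕ} (hm : m + 1 ≤ n) :
    (m + 1 : K) * cycleIndexSum q n (m + 1) =
      ∑ k ∈ range (m + 1), q (k + 1) * cycleIndexSum q n (m - k) := by
  have hslice (i : Fin n) :
      ∑ c ∈ tuplesOfWeight n (m + 1), ((i.val + 1) * c i : K) * cycleIndexTerm q c =
        if i.val ≤ m then q (i + 1) * cycleIndexSum q n (m - i) else 0 := by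
    split_ifs with hi
    · rw [sum_mul_cycleIndexTerm q i (by omega), Nat.add_sub_add_right]
    · refine sum_eq_zero fun c hc => ?_
      have := le_tupleWeight c i
      rw [mem_tuplesOfWeight.1 hc] at this
      have hci : c i = 0 := by nlinarith
      simp [hci]
  calc (m + 1 : K) * cycleIndexSum q n (m + 1)
      = ∑ c ∈ tuplesOfWeight n (m + 1), ∑ i : Fin n,
          ((i.val + 1) * c i : K) * cycleIndexTerm q c := by
        rw [cycleIndexSum, mul_sum]
        refine sum_congr rfl fun c hc => ?_
        rw [← sum_mul]
        exact_mod_cast congrArg (fun w : ℕ => (w : K) * cycleIndexTerm q c)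
          (mem_tuplesOfWeight.1 hc).symm
    _ = ∑ k ∈ range n, if k ≤ m then q (k + 1) * cycleIndexSum q n (m - k) else 0 := by
        rw [sum_comm, sum_congr rfl fun i _ => hslice i]
        exact Fin.sum_univ_eq_sum_range
          (fun k => if k ≤ m then q (k + 1) * cycleIndexSum q n (m - k) else 0) n
    _ = _ := by
        rw [← sum_filter]
        congr 1
        ext k
        simp only [mem_filter, mem_range]
        omega

end CycleIndex

noncomputable def zetaTerm (s : ℝ) (m : ℕ+) : ℝ≥0∞ := ENNReal.ofReal (((m : ℕ) : ℝ) ^ s)⁻¹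

theorem multZetaStar_eq_toReal_completeHomogeneousSum (r : ℕ) (s : ℝ) :
    multZetaStar r s = (ENNReal.completeHomogeneousSum (zetaTerm s) r).toReal := by
  have hterm (f : {f : Fin r → ℕ+ // Antitone f}) :
      (((Equiv.ofBijective _ bijective_sym_ofFn_antitone f : Sym ℕ+ r) : Multiset ℕ+).map
        (zetaTerm s)).prod = ∏ i, zetaTerm s (f.1 i) := by
    rw [Equiv.ofBijective_apply, Sym.coe_mk, Multiset.map_coe, Multiset.prod_coe, List.map_ofFn,
      List.prod_ofFn]
    rfl
  rw [multZetaStar, ENNReal.completeHomogeneousSum,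
    ← (Equiv.ofBijective _ bijective_sym_ofFn_antitone).tsum_eq, tsum_congr hterm,
    ENNReal.tsum_toReal_eq fun f =>
      ENNReal.prod_ne_top fun i _ => (ENNReal.ofReal_ne_top : zetaTerm s (f.1 i) ≠ ∞)]
  refine tsum_congr fun f => ?_
  rw [ENNReal.toReal_prod]
  exact prod_congr rfl fun i _ => (ENNReal.toReal_ofReal (by positivity)).symm

theorem riemannZetaReal_nonneg (s : ℝ) : 0 ≤ riemannZetaReal s :=
  tsum_nonneg fun _ => by positivity

theorem powerSum_zetaTerm {s : ℝ} (hs : 1 < s) (k : ℕ) :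
    ENNReal.powerSum (zetaTerm s) (k + 1) =
      ENNReal.ofReal (riemannZetaReal ((k + 1 : ℕ) * s)) := by
  have hks : 1 < ((k + 1 : ℕ) : ℝ) * s := by
    have : (1 : ℝ) ≤ (k + 1 : ℕ) := by exact_mod_cast Nat.succ_pos k
    nlinarith
  have hsummable : Summable fun m : ℕ+ => (((m : ℕ) : ℝ) ^ (((k + 1 : ℕ) : ℝ) * s))⁻¹ :=
    (Real.summable_nat_rpow_inv.2 hks).comp_injective PNat.coe_injective
  rw [riemannZetaReal, ENNReal.ofReal_tsum_of_nonneg (fun _ => by positivity) hsummable]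
  refine tsum_congr fun m => ?_
  rw [zetaTerm, ← ENNReal.ofReal_pow (by positivity), inv_pow, mul_comm,
    Real.rpow_mul (Nat.cast_nonneg _), Real.rpow_natCast]

theorem multZetaStar_explicit_general (r : ℕ) (s : ℝ) (hs : 1 < s) :
    multZetaStar r s =
      ∑ c ∈ weightedTuples r,
        1 / (∏ i : Fin r, ((((i : ℕ) + 1 : ℕ) : ℝ) ^ c i * ((c i).factorial : ℝ))) *
        ∏ i : Fin r, riemannZetaReal ((((i : ℕ) + 1 : ℕ) : ℝ) * s) ^ c i := by
  set ζ : ℕ → ℝ := fun k => riemannZetaReal (k * s)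
  have hp_ne_top (k : ℕ) : ENNReal.powerSum (zetaTerm s) (k + 1) ≠ ∞ := by
    rw [powerSum_zetaTerm hs]
    exact ENNReal.ofReal_ne_top
  have hp_toReal (k : ℕ) : (ENNReal.powerSum (zetaTerm s) (k + 1)).toReal = ζ (k + 1) := by
    rw [powerSum_zetaTerm hs, ENNReal.toReal_ofReal (riemannZetaReal_nonneg _)]
  have hnewton (n : ℕ) := ENNReal.toReal_completeHomogeneousSum_newton hp_ne_top n
  simp only [hp_toReal] at hnewton
  have key := eq_of_newton_recursion (p := ζ) (N := r)
    (u := fun n => (ENNReal.completeHomogeneousSum (zetaTerm s) n).toReal)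
    (v := cycleIndexSum ζ r)
    (by simp [ENNReal.completeHomogeneousSum_zero, cycleIndexSum_zero])
    (fun n _ => hnewton n) (fun n hn => cycleIndexSum_newton ζ hn)
  rw [multZetaStar_eq_toReal_completeHomogeneousSum, key r le_rfl]
  refine sum_congr rfl fun c _ => ?_
  simp [cycleIndexTerm, centralizerCard, ζ]

/-- For `r ≥ 1` and real `s > 1`:
`ζ_r⋆(s) = ∑_{c₁+2c₂+⋯+rc_r=r} 1/(1^{c₁}c₁!⋯r^{c_r}c_r!) · ζ(s)^{c₁}⋯ζ(rs)^{c_r}`. -/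
theorem multZetaStar_explicit (r : ℕ) (hr : 1 ≤ r) (s : ℝ) (hs : 1 < s) :
    multZetaStar r s =
      ∑ c ∈ weightedTuples r,
        1 / (∏ i : Fin r, ((((i : ℕ) + 1 : ℕ) : ℝ) ^ c i * ((c i).factorial : ℝ))) *
        ∏ i : Fin r, riemannZetaReal ((((i : ℕ) + 1 : ℕ) : ℝ) * s) ^ c i :=
  multZetaStar_explicit_general r s hs
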